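/- arXiv:2407.13203 — 5 statements merged into one kernel-verified Lean document; each statement's English description precedes it below -/
import Mathlib

section
/- Let a, b, c be real numbers with a ≤ b ≤ c and a + b + c = 0. Then −(1/√6)·(a² + b² + c²)^{3/2} ≤ a³ + b³ + c³ ≤ (1/√6)·(a² + b² + c²)^{3/2}. -/
theorem stmt_0 (a b c : ℝ) (hab : a ≤ b) (hbc : b ≤ c) (hsum : a + b + c = 0) :
    -(1 / Real.sqrt 6) * (a ^ 2 + b ^ 2 + c ^ 2) ^ ((3 : ℝ) / 2) ≤ a ^ 3 + b ^ 3 + c ^ 3 ∧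
    a ^ 3 + b ^ 3 + c ^ 3 ≤ (1 / Real.sqrt 6) * (a ^ 2 + b ^ 2 + c ^ 2) ^ ((3 : ℝ) / 2) := by
  set s : ℝ := a ^ 2 + b ^ 2 + c ^ 2 with hsdef
  have hs : 0 ≤ s := by positivity
  have hc : c = -(a + b) := by linarith
  have hkey : (a ^ 3 + b ^ 3 + c ^ 3) ^ 2 ≤ s ^ 3 / 6 := by
    subst hc
    simp only [hsdef]
    nlinarith [sq_nonneg ((a - b) * (2 * a + b) * (a + 2 * b)), sq_nonneg (a - b),
      sq_nonneg (a + b), sq_nonneg a, sq_nonneg b]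
  have habs : |a ^ 3 + b ^ 3 + c ^ 3| ≤ Real.sqrt (s ^ 3 / 6) :=
    Real.abs_le_sqrt hkey
  have hsqrt : Real.sqrt (s ^ 3 / 6) = (1 / Real.sqrt 6) * s ^ ((3 : ℝ) / 2) := by
    rw [show s ^ ((3:ℝ)/2) = Real.sqrt (s ^ 3) by
      rw [Real.sqrt_eq_rpow, ← Real.rpow_natCast s 3, ← Real.rpow_mul hs]
      norm_num]
    rw [Real.sqrt_div (by positivity : (0:ℝ) ≤ s ^ 3)]
    ring
  rw [hsqrt] at habs
  constructor
  · linarith [neg_abs_le (a ^ 3 + b ^ 3 + c ^ 3)]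
  · linarith [le_abs_self (a ^ 3 + b ^ 3 + c ^ 3)]
end

section
/- Let a, b, c be real numbers with a ≤ b ≤ c and a + b + c = 0. Then a³ + b³ + c³ = −(1/√6)·(a² + b² + c²)^{3/2} if and only if b = c = −a/2. -/
/-!
When `a + b + c = 0`, the discriminant of the cubic with roots `a, b, c` gives
`6 (a³ + b³ + c³)² = (a² + b² + c²)³ - 2 ((a - b)(b - c)(c - a))²`. Hence the equation says
exactly that `a³ + b³ + c³ ≤ 0` and two of the numbers coincide. For `a ≤ b ≤ c`, the case
`a = b` forces `c = -2a` with `a ≤ 0 ≤ a`, so only `b = c = -a/2` remains.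
-/

lemma eq_neg_one_div_sqrt_mul_rpow_three_halves_iff {k x y : ℝ} (hk : 0 < k) (hx : 0 ≤ x) :
    y = -(1 / √k) * x ^ ((3 : ℝ) / 2) ↔ y ≤ 0 ∧ k * y ^ 2 = x ^ 3 := by
  set r := 1 / √k * x ^ ((3 : ℝ) / 2) with hr
  have hr_nonneg : 0 ≤ r := by positivity
  have hr_sq : k * r ^ 2 = x ^ 3 := by
    rw [hr, Real.rpow_div_two_eq_sqrt _ hx, mul_pow, div_pow, Real.sq_sqrt hk.le,
      show (3 : ℝ) = (3 : ℕ) by norm_num, Real.rpow_natCast, ← pow_mul,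
      show 3 * 2 = 2 * 3 from rfl, pow_mul, Real.sq_sqrt hx]
    field_simp
  rw [neg_mul]
  constructor
  · rintro rfl
    exact ⟨by linarith, by rw [neg_sq, hr_sq]⟩
  · rintro ⟨hy, hky⟩
    have hsq : (-y) ^ 2 = r ^ 2 := by
      rw [neg_sq]
      exact mul_left_cancel₀ hk.ne' (hky.trans hr_sq.symm)
    linarith [(pow_left_inj₀ (by linarith) hr_nonneg two_ne_zero).mp hsq]

lemma six_mul_sum_cubes_sq {a b c : ℝ} (hsum : a + b + c = 0) :
    6 * (a ^ 3 + b ^ 3 + c ^ 3) ^ 2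
      = (a ^ 2 + b ^ 2 + c ^ 2) ^ 3 - 2 * ((a - b) * (b - c) * (c - a)) ^ 2 := by
  obtain rfl : c = -a - b := by linarith
  ring

lemma six_mul_sum_cubes_sq_eq_iff {a b c : ℝ} (hsum : a + b + c = 0) :
    6 * (a ^ 3 + b ^ 3 + c ^ 3) ^ 2 = (a ^ 2 + b ^ 2 + c ^ 2) ^ 3
      ↔ (a - b) * (b - c) * (c - a) = 0 := by
  rw [six_mul_sum_cubes_sq hsum, sub_eq_self, mul_eq_zero_iff_left two_ne_zero, sq_eq_zero_iff]

lemma sum_cubes_nonpos_and_vandermonde_eq_zero_iff {a b c : ℝ} (hab : a ≤ b) (hbc : b ≤ c)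
    (hsum : a + b + c = 0) :
    a ^ 3 + b ^ 3 + c ^ 3 ≤ 0 ∧ (a - b) * (b - c) * (c - a) = 0 ↔ b = -a / 2 ∧ c = -a / 2 := by
  obtain rfl : c = -a - b := by linarith
  constructor
  · rintro ⟨hneg, hdisc⟩
    rcases mul_eq_zero.mp hdisc with h | hca
    rcases mul_eq_zero.mp h with hab' | hbc'
    · obtain rfl : b = a := by linarith
      have : 0 ≤ b := (Odd.pow_nonneg_iff (n := 3) (by decide)).mp (by nlinarith)
      constructor <;> linarith
    · constructor <;> linarith
    · constructor <;> linarith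
  · rintro ⟨rfl, -⟩
    constructor
    · nlinarith [pow_two_nonneg a]
    · ring

theorem stmt_1 (a b c : ℝ) (hab : a ≤ b) (hbc : b ≤ c) (hsum : a + b + c = 0) :
    a ^ 3 + b ^ 3 + c ^ 3 = -(1 / Real.sqrt 6) * (a ^ 2 + b ^ 2 + c ^ 2) ^ ((3 : ℝ) / 2) ↔
    (b = -a / 2 ∧ c = -a / 2) := by
  rw [eq_neg_one_div_sqrt_mul_rpow_three_halves_iff (by norm_num) (by positivity),
    six_mul_sum_cubes_sq_eq_iff hsum, sum_cubes_nonpos_and_vandermonde_eq_zero_iff hab hbc hsum]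
end

section
/- Let h be a 4×4 real symmetric matrix with trace zero, define R_{ijkl} = δ_{ik}δ_{jl} − δ_{il}δ_{jk} + h_{ik}h_{jl} − h_{il}h_{jk}, Ric_{ij} = Σ_k R_{ikjk}, R_M = Σ_i Ric_{ii}, and the Weyl tensor W_{ijkl} = R_{ijkl} − (1/2)(Ric_{ik}δ_{jl} − Ric_{il}δ_{jk} + Ric_{jl}δ_{ik} − Ric_{jk}δ_{il}) + (R_M/6)(δ_{ik}δ_{jl} − δ_{il}δ_{jk}). Then Σ_{i,j,k,l} (W_{ijkl})² = (7/3)·(Σ_{i,j} h_{ij}²)² − 4·Σ_i (h⁴)_{ii}, where h⁴ is the fourth matrix power of h. -/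
set_option maxHeartbeats 1000000000 in
open Matrix in
theorem stmt_9 (h : Matrix (Fin 4) (Fin 4) ℝ) (hsymm : h.IsSymm) (htr : h.trace = 0)
    (R : Fin 4 → Fin 4 → Fin 4 → Fin 4 → ℝ)
    (hR : ∀ i j k l, R i j k l =
      (if i = k then 1 else 0) * (if j = l then 1 else 0) -
        (if i = l then 1 else 0) * (if j = k then 1 else 0) +
        h i k * h j l - h i l * h j k)
    (Ric : Fin 4 → Fin 4 → ℝ)
    (hRic : ∀ i j, Ric i j = ∑ k, R i k j k)
    (RM : ℝ) (hRM : RM = ∑ i, Ric i i)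
    (W : Fin 4 → Fin 4 → Fin 4 → Fin 4 → ℝ)
    (hW : ∀ i j k l, W i j k l =
      R i j k l -
        (1 / 2) * (Ric i k * (if j = l then 1 else 0) - Ric i l * (if j = k then 1 else 0) +
          Ric j l * (if i = k then 1 else 0) - Ric j k * (if i = l then 1 else 0)) +
        (RM / 6) * ((if i = k then 1 else 0) * (if j = l then 1 else 0) -
          (if i = l then 1 else 0) * (if j = k then 1 else 0))) :
    ∑ i, ∑ j, ∑ k, ∑ l, (W i j k l) ^ 2 =
      (7 / 3) * (∑ i, ∑ j, (h i j) ^ 2) ^ 2 - 4 * ∑ i, (h ^ 4) i i := by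
  have hs : ∀ i j, h j i = h i j := fun i j => hsymm.apply i j
  have ht : h 3 3 = -(h 0 0 + h 1 1 + h 2 2) := by
    have := htr
    simp [Matrix.trace, Matrix.diag, Fin.sum_univ_four] at this
    linarith
  have hp : ∀ i : Fin 4, (h ^ 4) i i = ∑ a, ∑ b, ∑ c, h i a * h a b * h b c * h c i := by
    intro i
    simp [show (4:ℕ) = 3 + 1 from rfl, pow_succ, pow_zero,
      Matrix.mul_apply, Fin.sum_univ_four]
    fin_cases i <;> ring
  simp only [hW, hR, hRic, hRM, hp, Fin.sum_univ_four]
  simp only [Fin.reduceEq, reduceIte, mul_one, mul_zero, one_mul, zero_mul, sub_zero, zero_sub, add_zero, zero_add, mul_neg, neg_neg]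
  rw [hs 0 1, hs 0 2, hs 0 3, hs 1 2, hs 1 3, hs 2 3, ht]
  ring1
end

section
/- Let h be a 4×4 real symmetric matrix with trace zero, define R_{ijkl} = δ_{ik}δ_{jl} − δ_{il}δ_{jk} + h_{ik}h_{jl} − h_{il}h_{jk}, Ric_{ij} = Σ_k R_{ikjk}, R_M = Σ_i Ric_{ii}, and W_{ijkl} = R_{ijkl} − (1/2)(Ric_{ik}δ_{jl} − Ric_{il}δ_{jk} + Ric_{jl}δ_{ik} − Ric_{jk}δ_{il}) + (R_M/6)(δ_{ik}δ_{jl} − δ_{il}δ_{jk}). Then R_M²/3 − Σ_{i,j}(Ric_{ij})² + (1/2)·Σ_{i,j,k,l}(W_{ijkl})² = (3/2)·(Σ_{i,j} h_{ij}²)² − 3·Σ_i (h⁴)_{ii} − 2·Σ_{i,j} h_{ij}² + 12, where h⁴ is the fourth matrix power of h. -/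
set_option maxHeartbeats 4000000

private def dd : Fin 4 → Fin 4 → ℝ := fun i j => if i = j then 1 else 0

private lemma dvv (i j : Fin 4) : dd i j = if i = j then 1 else 0 := rfl

private lemma dd00 : dd 0 0 = 1 := rfl
private lemma dd01 : dd 0 1 = 0 := rfl
private lemma dd02 : dd 0 2 = 0 := rfl
private lemma dd03 : dd 0 3 = 0 := rfl
private lemma dd10 : dd 1 0 = 0 := rfl
private lemma dd11 : dd 1 1 = 1 := rfl
private lemma dd12 : dd 1 2 = 0 := rfl
private lemma dd13 : dd 1 3 = 0 := rfl
private lemma dd20 : dd 2 0 = 0 := rfl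
private lemma dd21 : dd 2 1 = 0 := rfl
private lemma dd22 : dd 2 2 = 1 := rfl
private lemma dd23 : dd 2 3 = 0 := rfl
private lemma dd30 : dd 3 0 = 0 := rfl
private lemma dd31 : dd 3 1 = 0 := rfl
private lemma dd32 : dd 3 2 = 0 := rfl
private lemma dd33 : dd 3 3 = 1 := rfl

open Matrix in
theorem stmt_11 (h : Matrix (Fin 4) (Fin 4) ℝ) (hsymm : h.IsSymm) (htr : h.trace = 0)
    (R : Fin 4 → Fin 4 → Fin 4 → Fin 4 → ℝ)
    (hR : ∀ i j k l, R i j k l =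
      (if i = k then 1 else 0) * (if j = l then 1 else 0) -
        (if i = l then 1 else 0) * (if j = k then 1 else 0) +
        h i k * h j l - h i l * h j k)
    (Ric : Fin 4 → Fin 4 → ℝ)
    (hRic : ∀ i j, Ric i j = ∑ k, R i k j k)
    (RM : ℝ) (hRM : RM = ∑ i, Ric i i)
    (W : Fin 4 → Fin 4 → Fin 4 → Fin 4 → ℝ)
    (hW : ∀ i j k l, W i j k l =
      R i j k l -
        (1 / 2) * (Ric i k * (if j = l then 1 else 0) - Ric i l * (if j = k then 1 else 0) +
          Ric j l * (if i = k then 1 else 0) - Ric j k * (if i = l then 1 else 0)) +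
        (RM / 6) * ((if i = k then 1 else 0) * (if j = l then 1 else 0) -
          (if i = l then 1 else 0) * (if j = k then 1 else 0))) :
    RM ^ 2 / 3 - (∑ i, ∑ j, (Ric i j) ^ 2) + (1 / 2) * ∑ i, ∑ j, ∑ k, ∑ l, (W i j k l) ^ 2 =
      (3 / 2) * (∑ i, ∑ j, (h i j) ^ 2) ^ 2 - 3 * (∑ i, (h ^ 4) i i) -
        2 * (∑ i, ∑ j, (h i j) ^ 2) + 12 := by
  have hs : ∀ i j, h j i = h i j := fun i j => hsymm.apply i j
  have htr' : h 0 0 + h 1 1 + h 2 2 + h 3 3 = 0 := by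
    have := htr; rw [Matrix.trace, Fin.sum_univ_four] at this; exact this
  have h33 : h 3 3 = -(h 0 0 + h 1 1 + h 2 2) := by linarith
  -- closed form for Ric
  have hRic2 : ∀ i j, Ric i j = 3 * dd i j - (∑ k, h i k * h k j) := by
    intro i j
    rw [hRic, dvv]
    simp only [hR]
    simp only [Fin.sum_univ_four, eq_self_iff_true, if_true]
    have L1 : (if i = (0:Fin 4) then (1:ℝ) else 0) * (if (0:Fin 4) = j then 1 else 0) +
        (if i = (1:Fin 4) then (1:ℝ) else 0) * (if (1:Fin 4) = j then 1 else 0) +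
        (if i = (2:Fin 4) then (1:ℝ) else 0) * (if (2:Fin 4) = j then 1 else 0) +
        (if i = (3:Fin 4) then (1:ℝ) else 0) * (if (3:Fin 4) = j then 1 else 0) =
        if i = j then 1 else 0 := by
      rw [← Fin.sum_univ_four (fun k => (if i = k then (1:ℝ) else 0) * (if k = j then 1 else 0))]
      simp [boole_mul, Finset.sum_ite_eq]
    linear_combination h i j * htr' - L1
  -- closed form for RM
  have hRM2 : RM = 12 - (∑ i, ∑ j, (h i j) ^ 2) := by
    rw [hRM, Fin.sum_univ_four, hRic2, hRic2, hRic2, hRic2]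
    simp only [Fin.sum_univ_four, dd00, dd11, dd22, dd33]
    rw [hs 0 1, hs 0 2, hs 0 3, hs 1 2, hs 1 3, hs 2 3]
    ring
  -- closed form for W
  have hW2 : ∀ i j k l, W i j k l =
      h i k * h j l - h i l * h j k +
        (1/2) * ((∑ m, h i m * h m k) * dd j l
          - (∑ m, h i m * h m l) * dd j k
          + (∑ m, h j m * h m l) * dd i k
          - (∑ m, h j m * h m k) * dd i l)
        - ((∑ i, ∑ j, (h i j) ^ 2)/6) * (dd i k * dd j l - dd i l * dd j k) := by
    intro i j k l
    simp only [dvv]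
    rw [hW, hR, hRic2 i k, hRic2 i l, hRic2 j l, hRic2 j k, hRM2]
    simp only [dvv]
    ring
  clear hW hR hRic hRM htr
  have hpow : (∑ i, (h ^ 4) i i) =
      ∑ i : Fin 4, ∑ a : Fin 4, (∑ b, h i b * h b a) * (∑ c, h a c * h c i) := by
    have h4 : h ^ 4 = h * h * h * h := by
      rw [pow_succ, pow_succ, pow_two]
    rw [h4]
    simp only [Matrix.mul_apply, Fin.sum_univ_four]
    ring
  rw [hpow, hRM2]
  simp only [hRic2, Fin.sum_univ_four]
  simp only [hW2, Fin.sum_univ_four]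
  simp only [dd00, dd01, dd02, dd03, dd10, dd11, dd12, dd13,
    dd20, dd21, dd22, dd23, dd30, dd31, dd32, dd33]
  rw [hs 0 1, hs 0 2, hs 0 3, hs 1 2, hs 1 3, hs 2 3, h33]
  ring
end

section
/- Let λ > 0 be a real number, set μ₁ = μ₂ = −λ, μ₃ = 0, μ₄ = 2λ, and let t : {1,2,3,4}³ → ℝ be fully symmetric in its three indices with t(1,1,k) + t(2,2,k) = 0, t(3,3,k) = 0, t(4,4,k) = 0 for every k. If 3λ²·Σ_{i,j,k} t(i,j,k)² = 2·Σ_{i,j,k} μᵢ² t(i,j,k)² + Σ_{i,j,k} μᵢ μⱼ t(i,j,k)², then t(1,1,3) = t(1,2,3) = t(1,3,4) = t(2,3,4) = 0. -/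
theorem stmt_16 (lam : ℝ) (hlam : 0 < lam)
    (mu : Fin 4 → ℝ) (hmu : mu = ![-lam, -lam, 0, 2 * lam])
    (t : Fin 4 → Fin 4 → Fin 4 → ℝ)
    (hsymm12 : ∀ i j k, t i j k = t j i k)
    (hsymm23 : ∀ i j k, t i j k = t i k j)
    (h12 : ∀ k, t 0 0 k + t 1 1 k = 0)
    (h33 : ∀ k, t 2 2 k = 0)
    (h44 : ∀ k, t 3 3 k = 0)
    (hmain : 3 * lam ^ 2 * ∑ i, ∑ j, ∑ k, (t i j k) ^ 2 =
      2 * (∑ i, ∑ j, ∑ k, (mu i) ^ 2 * (t i j k) ^ 2) +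
        ∑ i, ∑ j, ∑ k, (mu i) * (mu j) * (t i j k) ^ 2) :
    t 0 0 2 = 0 ∧ t 0 1 2 = 0 ∧ t 0 2 3 = 0 ∧ t 1 2 3 = 0 := by
  subst hmu
  simp only [Fin.sum_univ_four, Matrix.cons_val_zero, Matrix.cons_val_one, Matrix.head_cons,
    Matrix.cons_val_two, Matrix.tail_cons, Matrix.cons_val_three] at hmain
  have e010 : t 0 1 0 = t 0 0 1 := by rw [hsymm23 0 1 0]
  have e020 : t 0 2 0 = t 0 0 2 := by rw [hsymm23 0 2 0]
  have e021 : t 0 2 1 = t 0 1 2 := by rw [hsymm23 0 2 1]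
  have e030 : t 0 3 0 = t 0 0 3 := by rw [hsymm23 0 3 0]
  have e031 : t 0 3 1 = t 0 1 3 := by rw [hsymm23 0 3 1]
  have e032 : t 0 3 2 = t 0 2 3 := by rw [hsymm23 0 3 2]
  have e100 : t 1 0 0 = t 0 0 1 := by rw [hsymm12 1 0 0, hsymm23 0 1 0]
  have e101 : t 1 0 1 = t 0 1 1 := by rw [hsymm12 1 0 1]
  have e102 : t 1 0 2 = t 0 1 2 := by rw [hsymm12 1 0 2]
  have e103 : t 1 0 3 = t 0 1 3 := by rw [hsymm12 1 0 3]
  have e110 : t 1 1 0 = t 0 1 1 := by rw [hsymm23 1 1 0, hsymm12 1 0 1]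
  have e120 : t 1 2 0 = t 0 1 2 := by rw [hsymm23 1 2 0, hsymm12 1 0 2]
  have e121 : t 1 2 1 = t 1 1 2 := by rw [hsymm23 1 2 1]
  have e130 : t 1 3 0 = t 0 1 3 := by rw [hsymm23 1 3 0, hsymm12 1 0 3]
  have e131 : t 1 3 1 = t 1 1 3 := by rw [hsymm23 1 3 1]
  have e132 : t 1 3 2 = t 1 2 3 := by rw [hsymm23 1 3 2]
  have e200 : t 2 0 0 = t 0 0 2 := by rw [hsymm12 2 0 0, hsymm23 0 2 0]
  have e201 : t 2 0 1 = t 0 1 2 := by rw [hsymm12 2 0 1, hsymm23 0 2 1]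
  have e202 : t 2 0 2 = t 0 2 2 := by rw [hsymm12 2 0 2]
  have e203 : t 2 0 3 = t 0 2 3 := by rw [hsymm12 2 0 3]
  have e210 : t 2 1 0 = t 0 1 2 := by rw [hsymm12 2 1 0, hsymm23 1 2 0, hsymm12 1 0 2]
  have e211 : t 2 1 1 = t 1 1 2 := by rw [hsymm12 2 1 1, hsymm23 1 2 1]
  have e212 : t 2 1 2 = t 1 2 2 := by rw [hsymm12 2 1 2]
  have e213 : t 2 1 3 = t 1 2 3 := by rw [hsymm12 2 1 3]
  have e220 : t 2 2 0 = t 0 2 2 := by rw [hsymm23 2 2 0, hsymm12 2 0 2]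
  have e221 : t 2 2 1 = t 1 2 2 := by rw [hsymm23 2 2 1, hsymm12 2 1 2]
  have e230 : t 2 3 0 = t 0 2 3 := by rw [hsymm23 2 3 0, hsymm12 2 0 3]
  have e231 : t 2 3 1 = t 1 2 3 := by rw [hsymm23 2 3 1, hsymm12 2 1 3]
  have e232 : t 2 3 2 = t 2 2 3 := by rw [hsymm23 2 3 2]
  have e300 : t 3 0 0 = t 0 0 3 := by rw [hsymm12 3 0 0, hsymm23 0 3 0]
  have e301 : t 3 0 1 = t 0 1 3 := by rw [hsymm12 3 0 1, hsymm23 0 3 1]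
  have e302 : t 3 0 2 = t 0 2 3 := by rw [hsymm12 3 0 2, hsymm23 0 3 2]
  have e303 : t 3 0 3 = t 0 3 3 := by rw [hsymm12 3 0 3]
  have e310 : t 3 1 0 = t 0 1 3 := by rw [hsymm12 3 1 0, hsymm23 1 3 0, hsymm12 1 0 3]
  have e311 : t 3 1 1 = t 1 1 3 := by rw [hsymm12 3 1 1, hsymm23 1 3 1]
  have e312 : t 3 1 2 = t 1 2 3 := by rw [hsymm12 3 1 2, hsymm23 1 3 2]
  have e313 : t 3 1 3 = t 1 3 3 := by rw [hsymm12 3 1 3]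
  have e320 : t 3 2 0 = t 0 2 3 := by rw [hsymm12 3 2 0, hsymm23 2 3 0, hsymm12 2 0 3]
  have e321 : t 3 2 1 = t 1 2 3 := by rw [hsymm12 3 2 1, hsymm23 2 3 1, hsymm12 2 1 3]
  have e322 : t 3 2 2 = t 2 2 3 := by rw [hsymm12 3 2 2, hsymm23 2 3 2]
  have e323 : t 3 2 3 = t 2 3 3 := by rw [hsymm12 3 2 3]
  have e330 : t 3 3 0 = t 0 3 3 := by rw [hsymm23 3 3 0, hsymm12 3 0 3]
  have e331 : t 3 3 1 = t 1 3 3 := by rw [hsymm23 3 3 1, hsymm12 3 1 3]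
  have e332 : t 3 3 2 = t 2 3 3 := by rw [hsymm23 3 3 2, hsymm12 3 2 3]
  rw [e010, e020, e021, e030, e031, e032, e100, e101, e102, e103, e110, e120, e121, e130, e131, e132, e200, e201, e202, e203, e210, e211, e212, e213, e220, e221, e230, e231, e232, e300, e301, e302, e303, e310, e311, e312, e313, e320, e321, e322, e323, e330, e331, e332] at hmain

  have z022 : t 0 2 2 = 0 := by rw [hsymm12 0 2 2, hsymm23 2 0 2, hsymm12 2 2 0]; exact h33 0
  have z122 : t 1 2 2 = 0 := by rw [hsymm12 1 2 2, hsymm23 2 1 2, hsymm12 2 2 1]; exact h33 1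
  have z222 : t 2 2 2 = 0 := h33 2
  have z223 : t 2 2 3 = 0 := h33 3
  have z033 : t 0 3 3 = 0 := by rw [hsymm12 0 3 3, hsymm23 3 0 3, hsymm12 3 3 0]; exact h44 0
  have z133 : t 1 3 3 = 0 := by rw [hsymm12 1 3 3, hsymm23 3 1 3, hsymm12 3 3 1]; exact h44 1
  have z233 : t 2 3 3 = 0 := by rw [hsymm12 2 3 3, hsymm23 3 2 3, hsymm12 3 3 2]; exact h44 2
  have z333 : t 3 3 3 = 0 := h44 3
  have z011 : t 0 1 1 = -(t 0 0 0) := by have h := e110; linarith [h12 0]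
  have z111 : t 1 1 1 = -(t 0 0 1) := by linarith [h12 1]
  have z112 : t 1 1 2 = -(t 0 0 2) := by linarith [h12 2]
  have z113 : t 1 1 3 = -(t 0 0 3) := by linarith [h12 3]
  rw [z022, z122, z222, z223, z033, z133, z233, z333, z011, z111, z112, z113] at hmain
  set a := t 0 0 2 with ha
  set b := t 0 1 2 with hb
  set c := t 0 2 3 with hc
  set d := t 1 2 3 with hd
  have key : 8*(lam*a)^2 + 8*(lam*b)^2 + 2*(lam*c)^2 + 2*(lam*d)^2 = 0 := by
    linear_combination hmain
  clear hmain
  have hl : lam ≠ 0 := ne_of_gt hlam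
  have sqz : ∀ x : ℝ, (lam*x)^2 = 0 → x = 0 := by
    intro x hx
    rcases mul_eq_zero.1 (pow_eq_zero_iff (two_ne_zero).symm.symm |>.1 hx) with h|h
    · exact absurd h hl
    · exact h
  have pa : (lam*a)^2 = 0 := le_antisymm (by linarith [sq_nonneg (lam*b), sq_nonneg (lam*c), sq_nonneg (lam*d)]) (sq_nonneg _)
  have pb : (lam*b)^2 = 0 := le_antisymm (by linarith [sq_nonneg (lam*a), sq_nonneg (lam*c), sq_nonneg (lam*d)]) (sq_nonneg _)
  have pc : (lam*c)^2 = 0 := le_antisymm (by linarith [sq_nonneg (lam*a), sq_nonneg (lam*b), sq_nonneg (lam*d)]) (sq_nonneg _)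
  have pd : (lam*d)^2 = 0 := le_antisymm (by linarith [sq_nonneg (lam*a), sq_nonneg (lam*b), sq_nonneg (lam*c)]) (sq_nonneg _)
  exact ⟨sqz a pa, sqz b pb, sqz c pc, sqz d pd⟩
end
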